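/- Positive squared magnetisation density implies mass in long cycles: let c > 0, t ≥ 0, n ≥ 1, and suppose E_t((∑_{k=1}^n k²·α_k)·2^α) ≥ c²·n²·Z_n(t). Set ε = c²/2. Then for every integer M ≥ 0 with n > M/ε, ∑_{k=M+1}^n (k/n)·E_t(α_k·2^α) ≥ ε²·Z_n(t). -/

import Mathlib

noncomputable section

/-- `αₖ(π)`: the number of cycles of length `k` of the permutation `π`
(fixed points count as cycles of length 1). -/
def cycCount {n : ℕ} (k : ℕ) (π : Equiv.Perm (Fin n)) : ℕ :=
  if k = 1 then (Finset.univ.filter fun x => π x = x).card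
  else Multiset.count k π.cycleType

/-- `α(π)`: the total number of cycles of `π` (fixed points included). -/
def cycTotal {n : ℕ} (π : Equiv.Perm (Fin n)) : ℕ :=
  Multiset.card π.cycleType + (Finset.univ.filter fun x => π x = x).card

open Classical in
/-- The generator (Laplacian) of the mean-field interchange process on `n` points:
`L(σ,σ) = n(n-1)/2`, `L(σ,τ) = -1` if `τσ⁻¹` is a transposition, and `0` otherwise. -/
def meanFieldL (n : ℕ) : Matrix (Equiv.Perm (Fin n)) (Equiv.Perm (Fin n)) ℝ :=
  Matrix.of fun σ τ =>
    if σ = τ then (n : ℝ) * ((n : ℝ) - 1) / 2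
    else if (τ * σ⁻¹).IsSwap then -1 else 0

/-- `p_t(π)`: the `(identity, π)` entry of `exp(-t L)`, the law at time `t` of the
mean-field interchange process started at the identity. -/
def pt (n : ℕ) (t : ℝ) (π : Equiv.Perm (Fin n)) : ℝ :=
  NormedSpace.exp ((-t) • meanFieldL n) 1 π

/-- `E_t(f) = ∑_π p_t(π) f(π)`. -/
def Et (n : ℕ) (t : ℝ) (f : Equiv.Perm (Fin n) → ℝ) : ℝ :=
  ∑ π : Equiv.Perm (Fin n), pt n t π * f π

/-- The partition function `Z_n(t) = E_t(2^α)`. -/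
def Zfun (n : ℕ) (t : ℝ) : ℝ := Et n t fun π => 2 ^ cycTotal π

/-- The expected squared magnetisation: `m_n(t) ≥ 0` with
`m_n(t)² = E_t((∑_{k=1}^n k² αₖ)·2^α) / Z_n(t)`. -/
def mMag (n : ℕ) (t : ℝ) : ℝ :=
  Real.sqrt (Et n t (fun π =>
    (∑ k ∈ Finset.Icc 1 n, (k : ℝ) ^ 2 * cycCount k π) * 2 ^ cycTotal π) / Zfun n t)


/-
Since `∑ₖ k αₖ(π) = n`, splitting `∑ₖ k² αₖ` at `k = M` gives the pointwise bound
`∑ₖ k² αₖ ≤ M n + n ∑_{k > M} k αₖ`. Summing it against the nonnegative weights `p_t · 2^α`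
turns the magnetisation hypothesis into `∑_{k > M} (k/n) E_t(αₖ 2^α) ≥ (c² - M/n) Z_n(t) ≥ ε Z_n(t)`,
and the case `M = n` of the same bound forces `c² ≤ 1`, so that `ε ≥ ε²`. Nonnegativity of
`p_t` holds because `-tL` has nonnegative off-diagonal entries.
-/

open NormedSpace Finset

namespace Matrix

variable {m : Type*} [Fintype m] [DecidableEq m]

theorem exp_apply_nonneg {A : Matrix m m ℝ} (hA : ∀ i j, 0 ≤ A i j) (i j : m) :
    0 ≤ exp A i j := by
  -- any matrix norm gives the normed-algebra structure the exponential series lemmas need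
  let : NormedRing (Matrix m m ℝ) := Matrix.linftyOpNormedRing
  let : NormedAlgebra ℝ (Matrix m m ℝ) := Matrix.linftyOpNormedAlgebra
  have hsum := Pi.hasSum.mp (Pi.hasSum.mp (exp_series_hasSum_exp' (𝕂 := ℝ) A) i) j
  exact hsum.nonneg fun k => mul_nonneg (by positivity) (pow_apply_nonneg hA k i j)

/-- Shifting by a multiple of the identity reduces this to `exp_apply_nonneg`. -/
theorem exp_apply_nonneg_of_pairwise {A : Matrix m m ℝ} (hA : Pairwise fun i j => 0 ≤ A i j)
    (i j : m) : 0 ≤ exp A i j := by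
  let : NormedRing (Matrix m m ℝ) := Matrix.linftyOpNormedRing
  let : NormedAlgebra ℝ (Matrix m m ℝ) := Matrix.linftyOpNormedAlgebra
  set r := ∑ k, |A k k|
  have hshift : ∀ k l, 0 ≤ (A + algebraMap ℝ _ r) k l := by
    intro k l
    rw [add_apply, algebraMap_matrix_apply, Algebra.algebraMap_self, RingHom.id_apply]
    rcases eq_or_ne k l with rfl | hkl
    · have : |A k k| ≤ r := single_le_sum (f := fun k => |A k k|) (fun _ _ => abs_nonneg _)
        (mem_univ k)
      rw [if_pos rfl]
      linarith [neg_abs_le (A k k)]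
    · simpa [hkl] using hA hkl
  have hA_eq : A = algebraMap ℝ _ (-r) + (A + algebraMap ℝ _ r) := by
    rw [map_neg]; abel
  have hexp : exp (algebraMap ℝ (Matrix m m ℝ) (-r)) = algebraMap ℝ _ (Real.exp (-r)) := by
    rw [Real.exp_eq_exp_ℝ]; exact (algebraMap_exp_comm _).symm
  rw [hA_eq, exp_add_of_commute _ _ (Algebra.commute_algebraMap_left _ _), hexp,
    Algebra.algebraMap_eq_smul_one, smul_one_mul, smul_apply, smul_eq_mul]
  exact mul_nonneg (Real.exp_pos _).le (exp_apply_nonneg hshift i j)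

end Matrix

theorem pt_nonneg (n : ℕ) {t : ℝ} (ht : 0 ≤ t) (π : Equiv.Perm (Fin n)) : 0 ≤ pt n t π := by
  refine Matrix.exp_apply_nonneg_of_pairwise (fun σ τ hστ => ?_) _ _
  simp only [meanFieldL, Matrix.smul_apply, Matrix.of_apply, if_neg hστ, smul_eq_mul]
  split_ifs <;> linarith

section Expectation

variable {n : ℕ} {t : ℝ}

theorem Et_mono (ht : 0 ≤ t) {f g : Equiv.Perm (Fin n) → ℝ} (h : ∀ π, f π ≤ g π) :
    Et n t f ≤ Et n t g :=
  sum_le_sum fun π _ => mul_le_mul_of_nonneg_left (h π) (pt_nonneg n ht π)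

theorem Et_nonneg (ht : 0 ≤ t) {f : Equiv.Perm (Fin n) → ℝ} (h : ∀ π, 0 ≤ f π) :
    0 ≤ Et n t f :=
  sum_nonneg fun π _ => mul_nonneg (pt_nonneg n ht π) (h π)

theorem Et_add (f g : Equiv.Perm (Fin n) → ℝ) :
    Et n t (fun π => f π + g π) = Et n t f + Et n t g := by
  simp only [Et, mul_add, sum_add_distrib]

theorem Et_const_mul (a : ℝ) (f : Equiv.Perm (Fin n) → ℝ) :
    Et n t (fun π => a * f π) = a * Et n t f := by
  simp only [Et, mul_sum, mul_left_comm]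

theorem Et_sum {ι : Type*} (s : Finset ι) (f : ι → Equiv.Perm (Fin n) → ℝ) :
    Et n t (fun π => ∑ k ∈ s, f k π) = ∑ k ∈ s, Et n t (f k) := by
  simp only [Et, mul_sum]
  exact sum_comm

theorem Zfun_nonneg (ht : 0 ≤ t) : 0 ≤ Zfun n t :=
  Et_nonneg ht fun _ => by positivity

end Expectation

theorem cycCount_eq {n : ℕ} (k : ℕ) (π : Equiv.Perm (Fin n)) :
    cycCount k π =
      π.cycleType.count k + if k = 1 then #(univ.filter fun x => π x = x) else 0 := by
  unfold cycCount
  split_ifs with hk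
  · subst hk
    rw [Multiset.count_eq_zero.mpr fun h => by linarith [Equiv.Perm.two_le_of_mem_cycleType h],
      zero_add]
  · rw [add_zero]

theorem sum_mul_cycCount {n : ℕ} (π : Equiv.Perm (Fin n)) :
    ∑ k ∈ Icc 1 n, k * cycCount k π = n := by
  have hsub : π.cycleType.toFinset ⊆ Icc 1 n := fun k hk => by
    rw [Multiset.mem_toFinset] at hk
    have hk_le : k ≤ n := (Equiv.Perm.le_card_support_of_mem_cycleType hk).trans
      (by simpa using π.support.card_le_univ)
    exact mem_Icc.mpr ⟨by linarith [Equiv.Perm.two_le_of_mem_cycleType hk], hk_le⟩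
  have hfix : (if 1 ∈ Icc 1 n then #(univ.filter fun x : Fin n => π x = x) else 0) =
      #(univ.filter fun x => π x = x) := by
    split_ifs with h
    · rfl
    · obtain rfl : n = 0 := by simpa using h
      simp
  calc ∑ k ∈ Icc 1 n, k * cycCount k π
      = ∑ k ∈ Icc 1 n, k * π.cycleType.count k + #(univ.filter fun x => π x = x) := by
        simp only [cycCount_eq, mul_add, sum_add_distrib, mul_ite, mul_zero, one_mul, sum_ite_eq',
          hfix]
    _ = #π.support + #(univ.filter fun x => π x = x) := by
        rw [← π.sum_cycleType, sum_multiset_count_of_subset _ _ hsub]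
        simp only [smul_eq_mul, mul_comm]
    _ = n := by
        have := univ.card_filter_add_card_filter_not (fun x : Fin n => π x ≠ x)
        simp only [not_not, card_univ, Fintype.card_fin] at this
        exact this

/-- The terms with `k ≤ M` are bounded via `k ≤ M`, the others via `k ≤ n`. -/
theorem sum_sq_mul_le (a : ℕ → ℝ) (ha : ∀ k, 0 ≤ a k) (M n : ℕ) :
    ∑ k ∈ Icc 1 n, (k : ℝ) ^ 2 * a k ≤
      M * ∑ k ∈ Icc 1 n, k * a k + n * ∑ k ∈ Icc (M + 1) n, k * a k := by
  have hfilter : (Icc 1 n).filter (fun k => M < k) = Icc (M + 1) n := by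
    ext k; simp only [mem_filter, mem_Icc]; omega
  rw [← hfilter, sum_filter, mul_sum, mul_sum, ← sum_add_distrib]
  refine sum_le_sum fun k hk => ?_
  have hka : 0 ≤ (k : ℝ) * a k := mul_nonneg k.cast_nonneg (ha k)
  rw [sq, mul_assoc]
  split_ifs with hMk
  · have hkn : (k : ℝ) ≤ n := by exact_mod_cast (mem_Icc.mp hk).2
    nlinarith
  · have hkM : (k : ℝ) ≤ M := by exact_mod_cast not_lt.mp hMk
    nlinarith

theorem Et_sum_sq_mul_cycCount_le {n : ℕ} {t : ℝ} (ht : 0 ≤ t) (M : ℕ) :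
    Et n t (fun π => (∑ k ∈ Icc 1 n, (k : ℝ) ^ 2 * cycCount k π) * 2 ^ cycTotal π) ≤
      M * n * Zfun n t +
        n * ∑ k ∈ Icc (M + 1) n, k * Et n t (fun π => (cycCount k π : ℝ) * 2 ^ cycTotal π) := by
  have hpointwise : ∀ π : Equiv.Perm (Fin n),
      (∑ k ∈ Icc 1 n, (k : ℝ) ^ 2 * cycCount k π) * 2 ^ cycTotal π ≤
        M * n * 2 ^ cycTotal π +
          n * ∑ k ∈ Icc (M + 1) n, k * ((cycCount k π : ℝ) * 2 ^ cycTotal π) := by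
    intro π
    have hsum : ∑ k ∈ Icc 1 n, (k : ℝ) * cycCount k π = n := by
      exact_mod_cast sum_mul_cycCount π
    have := sum_sq_mul_le (fun k => (cycCount k π : ℝ)) (fun _ => by positivity) M n
    rw [hsum] at this
    calc _ ≤ (M * n + n * ∑ k ∈ Icc (M + 1) n, k * (cycCount k π : ℝ)) * 2 ^ cycTotal π :=
          mul_le_mul_of_nonneg_right this (by positivity)
      _ = _ := by simp only [add_mul, sum_mul, mul_assoc]
  refine (Et_mono ht hpointwise).trans_eq ?_
  simp only [Et_add, Et_const_mul, Et_sum, Zfun]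

theorem mass_in_long_cycles_general (n : ℕ) (t : ℝ) (ht : 0 ≤ t) (c : ℝ) (hc : 0 < c)
    (hmag : Et n t (fun π =>
        (∑ k ∈ Finset.Icc 1 n, (k : ℝ) ^ 2 * cycCount k π) * 2 ^ cycTotal π)
      ≥ c ^ 2 * n ^ 2 * Zfun n t) :
    ∀ M : ℕ, (M : ℝ) / (c ^ 2 / 2) < n →
      ∑ k ∈ Finset.Icc (M + 1) n, ((k : ℝ) / n) *
          Et n t (fun π => (cycCount k π : ℝ) * 2 ^ cycTotal π)
        ≥ (c ^ 2 / 2) ^ 2 * Zfun n t := by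
  intro M hM
  have hsplit := Et_sum_sq_mul_cycCount_le ht (n := n) M
  have hcrude := Et_sum_sq_mul_cycCount_le ht (n := n) n
  rw [Icc_eq_empty (show ¬n + 1 ≤ n by omega), sum_empty, mul_zero, add_zero] at hcrude
  set Z := Zfun n t
  set X := ∑ k ∈ Icc (M + 1) n, k * Et n t (fun π => (cycCount k π : ℝ) * 2 ^ cycTotal π)
  have hε : 0 < c ^ 2 / 2 := by positivity
  have hMε : (M : ℝ) < c ^ 2 / 2 * n := by rwa [div_lt_iff₀ hε, mul_comm] at hM
  have hn : (0 : ℝ) < n := pos_of_mul_pos_right (M.cast_nonneg.trans_lt hMε) hε.le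
  have hZ : 0 ≤ Z := Zfun_nonneg ht
  have hcZ : c ^ 2 * Z ≤ Z :=
    le_of_mul_le_mul_left (a := (n : ℝ) ^ 2) (by linarith) (by positivity)
  have hX : c ^ 2 / 2 * n * Z ≤ X := by
    have := mul_le_mul_of_nonneg_right hMε.le (mul_nonneg hn.le hZ)
    exact le_of_mul_le_mul_left (a := (n : ℝ)) (by linarith) hn
  simp only [div_mul_eq_mul_div, ← sum_div]
  rw [ge_iff_le, le_div_iff₀ hn]
  calc (c ^ 2 / 2) ^ 2 * Z * n = c ^ 2 / 2 * n * (c ^ 2 / 2 * Z) := by ring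
    _ ≤ c ^ 2 / 2 * n * Z := mul_le_mul_of_nonneg_left (by linarith) (by positivity)
    _ ≤ X := hX

/-- Positive squared magnetisation density implies mass in long cycles: if
`E_t((∑ k² αₖ)·2^α) ≥ c² n² Z_n(t)` then, with `ε = c²/2`, for every `M` with `n > M/ε`
one has `∑_{k=M+1}^n (k/n) E_t(αₖ 2^α) ≥ ε² Z_n(t)`. -/
theorem mass_in_long_cycles (n : ℕ) (hn : 1 ≤ n) (t : ℝ) (ht : 0 ≤ t) (c : ℝ) (hc : 0 < c)
    (hmag : Et n t (fun π =>
        (∑ k ∈ Finset.Icc 1 n, (k : ℝ) ^ 2 * cycCount k π) * 2 ^ cycTotal π)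
      ≥ c ^ 2 * n ^ 2 * Zfun n t) :
    ∀ M : ℕ, (M : ℝ) / (c ^ 2 / 2) < n →
      ∑ k ∈ Finset.Icc (M + 1) n, ((k : ℝ) / n) *
          Et n t (fun π => (cycCount k π : ℝ) * 2 ^ cycTotal π)
        ≥ (c ^ 2 / 2) ^ 2 * Zfun n t :=
  mass_in_long_cycles_general n t ht c hc hmag

end
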